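/- (Element-wise Rademacher contraction) Let σ₁,…,σ_N be independent Rademacher variables, and for each n let ℓₙ: ℝ → ℝ be ρₙ-Lipschitz. Then for any set A ⊆ ℝᴺ: 𝔼_σ[sup_{a∈A} Σₙ σₙ ℓₙ(aₙ)] ≤ 𝔼_σ[sup_{a∈A} Σₙ σₙ ρₙ aₙ]. -/
import Mathlib
open Finset

private lemma key_sup {α : Type*} [Nonempty α] (g h p : α → ℝ)
    (hb3 : BddAbove (Set.range fun a => g a + p a))
    (hb4 : BddAbove (Set.range fun a => g a - p a))
    (hlip : ∀ a b, h a - h b ≤ max (p a - p b) (p b - p a)) :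
    (⨆ a, (g a + h a)) + (⨆ a, (g a - h a)) ≤ (⨆ a, (g a + p a)) + (⨆ a, (g a - p a)) := by
  set R1 := ⨆ a, (g a + p a)
  set R2 := ⨆ a, (g a - p a)
  have H : ∀ a b, (g a + h a) + (g b - h b) ≤ R1 + R2 := by
    intro a b
    rcases le_max_iff.mp (hlip a b) with hc | hc
    · have e1 : g a + p a ≤ R1 := le_ciSup hb3 a
      have e2 : g b - p b ≤ R2 := le_ciSup hb4 b
      linarith
    · have e1 : g b + p b ≤ R1 := le_ciSup hb3 b
      have e2 : g a - p a ≤ R2 := le_ciSup hb4 a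
      linarith
  have h1 : ∀ a, (g a + h a) + (⨆ b, (g b - h b)) ≤ R1 + R2 := by
    intro a
    have : (⨆ b, (g b - h b)) ≤ R1 + R2 - (g a + h a) :=
      ciSup_le fun b => by linarith [H a b]
    linarith
  have h2 : (⨆ a, (g a + h a)) ≤ R1 + R2 - (⨆ b, (g b - h b)) :=
    ciSup_le fun a => by linarith [h1 a]
  linarith

private lemma bdd_aux (N : ℕ) (f : Fin N → ℝ → ℝ) (ρ : Fin N → ℝ) (hρ : ∀ n, 0 ≤ ρ n)
    (hf : ∀ n s t, |f n s - f n t| ≤ ρ n * |s - t|)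
    (A : Set (Fin N → ℝ)) (hbdd : Bornology.IsBounded A)
    (c : Fin N → ℝ) (hc : ∀ n, |c n| ≤ 1) :
    BddAbove (Set.range fun a : A => ∑ n, c n * f n (a.1 n)) := by
  obtain ⟨R, hR⟩ := hbdd.exists_norm_le
  refine ⟨∑ n, (|f n 0| + ρ n * R), ?_⟩
  rintro x ⟨a, rfl⟩
  apply Finset.sum_le_sum
  intro n _
  have h2 : |a.1 n| ≤ R := by
    have := norm_le_pi_norm a.1 n
    have := hR a.1 a.2
    simp only [Real.norm_eq_abs] at *
    linarith
  have h1 : |f n (a.1 n) - f n 0| ≤ ρ n * R := by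
    calc |f n (a.1 n) - f n 0| ≤ ρ n * |a.1 n - 0| := hf n (a.1 n) 0
      _ = ρ n * |a.1 n| := by rw [sub_zero]
      _ ≤ ρ n * R := mul_le_mul_of_nonneg_left h2 (hρ n)
  have h3 : |f n (a.1 n)| ≤ |f n 0| + ρ n * R := by
    have := abs_sub_abs_le_abs_sub (f n (a.1 n)) (f n 0)
    linarith
  calc c n * f n (a.1 n) ≤ |c n * f n (a.1 n)| := le_abs_self _
    _ = |c n| * |f n (a.1 n)| := abs_mul _ _
    _ ≤ 1 * (|f n 0| + ρ n * R) :=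
        mul_le_mul (hc n) h3 (abs_nonneg _) zero_le_one
    _ = |f n 0| + ρ n * R := one_mul _

private lemma step_lemma (N : ℕ) (f : Fin N → ℝ → ℝ) (ρ : Fin N → ℝ) (hρ : ∀ n, 0 ≤ ρ n)
    (hf : ∀ n s t, |f n s - f n t| ≤ ρ n * |s - t|)
    (A : Set (Fin N → ℝ)) (hA : A.Nonempty) (hbdd : Bornology.IsBounded A) (m : Fin N) :
    (∑ s : Fin N → Bool, ⨆ a : A, ∑ n, (if s n then (1 : ℝ) else -1) * f n (a.1 n))
      ≤ ∑ s : Fin N → Bool, ⨆ a : A,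
          ∑ n, (if s n then (1 : ℝ) else -1) *
            (Function.update f m (fun x => ρ m * x)) n (a.1 n) := by
  haveI : Nonempty A := hA.to_subtype
  set f' : Fin N → ℝ → ℝ := Function.update f m (fun x => ρ m * x) with hf'def
  have hf' : ∀ n s t, |f' n s - f' n t| ≤ ρ n * |s - t| := by
    intro n s t
    by_cases hn : n = m
    · subst hn
      simp only [hf'def, Function.update_self]
      rw [← mul_sub, abs_mul, abs_of_nonneg (hρ n)]
    · simp only [hf'def, Function.update_of_ne hn]
      exact hf n s t
  let e : (Fin N → Bool) ≃ (Fin N → Bool) :=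
    { toFun := fun s => Function.update s m (!(s m))
      invFun := fun s => Function.update s m (!(s m))
      left_inv := by
        intro s; funext n
        by_cases hn : n = m
        · subst hn; simp
        · simp [Function.update_of_ne hn]
      right_inv := by
        intro s; funext n
        by_cases hn : n = m
        · subst hn; simp
        · simp [Function.update_of_ne hn] }
  set T : (Fin N → Bool) → ℝ :=
    fun s => ⨆ a : A, ∑ n, (if s n then (1 : ℝ) else -1) * f n (a.1 n) with hT
  set T' : (Fin N → Bool) → ℝ :=
    fun s => ⨆ a : A, ∑ n, (if s n then (1 : ℝ) else -1) * f' n (a.1 n) with hT'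
  suffices h : ∀ s, T s + T (e s) ≤ T' s + T' (e s) by
    have hsum := Finset.sum_le_sum (fun s (_ : s ∈ univ) => h s)
    rw [Finset.sum_add_distrib, Finset.sum_add_distrib] at hsum
    rw [Equiv.sum_comp e T, Equiv.sum_comp e T'] at hsum
    linarith
  intro s
  set ε : ℝ := if s m then 1 else -1 with hε
  have hεabs : |ε| = 1 := by rcases Bool.dichotomy (s m) with h | h <;> simp [hε, h]
  have hesm : (e s) m = !(s m) := by simp [e]
  have hesn : ∀ n, n ≠ m → (e s) n = s n := fun n hn => Function.update_of_ne hn _ _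
  have hεflip : (if (e s) m then (1 : ℝ) else -1) = -ε := by
    rw [hesm]; rcases Bool.dichotomy (s m) with h | h <;> simp [hε, h]
  set g : A → ℝ := fun a => ∑ n ∈ univ.erase m, (if s n then (1 : ℝ) else -1) * f n (a.1 n)
    with hg
  set h0 : A → ℝ := fun a => ε * f m (a.1 m) with hh0
  set p : A → ℝ := fun a => ε * (ρ m * a.1 m) with hp
  have e3 : ∀ a : A, ∑ n, (if s n then (1 : ℝ) else -1) * f n (a.1 n) = g a + h0 a := by
    intro a
    rw [hg, hh0, hε]
    exact (Finset.sum_erase_add univ _ (mem_univ m)).symm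
  have e4 : ∀ a : A, ∑ n, (if (e s) n then (1 : ℝ) else -1) * f n (a.1 n) = g a - h0 a := by
    intro a
    rw [← Finset.sum_erase_add univ _ (mem_univ m)]
    have h1 : ∑ n ∈ univ.erase m, (if (e s) n then (1 : ℝ) else -1) * f n (a.1 n) = g a :=
      Finset.sum_congr rfl fun n hn => by rw [hesn n (Finset.ne_of_mem_erase hn)]
    rw [h1, hεflip, hh0]
    ring
  have e1 : ∀ a : A, ∑ n, (if s n then (1 : ℝ) else -1) * f' n (a.1 n) = g a + p a := by
    intro a
    rw [← Finset.sum_erase_add univ _ (mem_univ m)]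
    have h1 : ∑ n ∈ univ.erase m, (if s n then (1 : ℝ) else -1) * f' n (a.1 n) = g a :=
      Finset.sum_congr rfl fun n hn => by
        rw [hf'def, Function.update_of_ne (Finset.ne_of_mem_erase hn)]
    rw [h1, hp, hε, hf'def, Function.update_self]
  have e2 : ∀ a : A, ∑ n, (if (e s) n then (1 : ℝ) else -1) * f' n (a.1 n) = g a - p a := by
    intro a
    rw [← Finset.sum_erase_add univ _ (mem_univ m)]
    have h1 : ∑ n ∈ univ.erase m, (if (e s) n then (1 : ℝ) else -1) * f' n (a.1 n) = g a :=
      Finset.sum_congr rfl fun n hn => by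
        rw [hesn n (Finset.ne_of_mem_erase hn),
          hf'def, Function.update_of_ne (Finset.ne_of_mem_erase hn)]
    rw [h1, hεflip, hp, hf'def, Function.update_self]
    ring
  have hcs : ∀ (t : Fin N → Bool) (n : Fin N), |if t n then (1 : ℝ) else -1| ≤ 1 := by
    intro t n; split <;> simp
  have hTs : T s = ⨆ a : A, (g a + h0 a) := iSup_congr e3
  have hTes : T (e s) = ⨆ a : A, (g a - h0 a) := iSup_congr e4
  have hT's : T' s = ⨆ a : A, (g a + p a) := iSup_congr e1
  have hT'es : T' (e s) = ⨆ a : A, (g a - p a) := iSup_congr e2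
  rw [hTs, hTes, hT's, hT'es]
  apply key_sup
  · exact (funext e1) ▸ bdd_aux N f' ρ hρ hf' A hbdd _ (hcs s)
  · exact (funext e2) ▸ bdd_aux N f' ρ hρ hf' A hbdd _ (hcs (e s))
  · intro a b
    have h1 : h0 a - h0 b ≤ |h0 a - h0 b| := le_abs_self _
    have h2 : |h0 a - h0 b| ≤ ρ m * |a.1 m - b.1 m| := by
      rw [hh0]; dsimp only
      rw [← mul_sub, abs_mul, hεabs, one_mul]
      exact hf m _ _
    have h3 : |p a - p b| = ρ m * |a.1 m - b.1 m| := by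
      rw [hp]; dsimp only
      rw [← mul_sub, ← mul_sub, abs_mul, abs_mul, hεabs, one_mul, abs_of_nonneg (hρ m)]
    have h5 := le_max_left (p a - p b) (p b - p a)
    have h6 := le_max_right (p a - p b) (p b - p a)
    rcases abs_cases (p a - p b) with ⟨heq, _⟩ | ⟨heq, _⟩ <;> linarith

/-- Element-wise Rademacher contraction: per-coordinate Lipschitz
functions can be replaced by their Lipschitz constants. The Rademacher expectation is
written as the average over all sign patterns `s : Fin N → Bool`. -/
theorem elementwise_rademacher_contraction
    (N : ℕ) (ℓ : Fin N → ℝ → ℝ) (ρ : Fin N → ℝ) (hρ : ∀ n, 0 ≤ ρ n)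
    (hlip : ∀ n s t, |ℓ n s - ℓ n t| ≤ ρ n * |s - t|)
    (A : Set (Fin N → ℝ)) (hA : A.Nonempty) (hbdd : Bornology.IsBounded A) :
    (∑ s : Fin N → Bool, ⨆ a : A, ∑ n, (if s n then (1 : ℝ) else -1) * ℓ n (a.1 n)) / 2 ^ N
      ≤ (∑ s : Fin N → Bool, ⨆ a : A, ∑ n, (if s n then (1 : ℝ) else -1) * (ρ n * a.1 n)) / 2 ^ N := by
  haveI : Nonempty A := hA.to_subtype
  have main : ∀ k : ℕ, k ≤ N →
      (∑ s : Fin N → Bool, ⨆ a : A, ∑ n, (if s n then (1 : ℝ) else -1) * ℓ n (a.1 n))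
        ≤ ∑ s : Fin N → Bool, ⨆ a : A, ∑ n, (if s n then (1 : ℝ) else -1) *
            (fun n : Fin N => if (n : ℕ) < k then (fun x => ρ n * x) else ℓ n) n (a.1 n) := by
    intro k hk
    induction k with
    | zero => simp
    | succ k ih =>
      have hkN : k < N := hk
      set m : Fin N := ⟨k, hkN⟩ with hm
      set fk : Fin N → ℝ → ℝ := fun n => if (n : ℕ) < k then (fun x => ρ n * x) else ℓ n
        with hfkdef
      have hfk : ∀ n s t, |fk n s - fk n t| ≤ ρ n * |s - t| := by
        intro n s t
        by_cases h : (n : ℕ) < k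
        · simp only [hfkdef, if_pos h]
          rw [← mul_sub, abs_mul, abs_of_nonneg (hρ n)]
        · simp only [hfkdef, if_neg h]
          exact hlip n s t
      have hupd : (fun n : Fin N => if (n : ℕ) < k + 1 then (fun x => ρ n * x) else ℓ n)
          = Function.update fk m (fun x => ρ m * x) := by
        funext n
        by_cases hn : n = m
        · subst hn
          rw [Function.update_self, if_pos (by simp [hm])]
        · rw [Function.update_of_ne hn, hfkdef]
          have hne : (n : ℕ) ≠ k := fun h => hn (Fin.ext (by simp [hm, h]))
          exact if_congr (by omega) rfl rfl
      calc (∑ s : Fin N → Bool, ⨆ a : A, ∑ n, (if s n then (1 : ℝ) else -1) * ℓ n (a.1 n))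
          ≤ ∑ s : Fin N → Bool, ⨆ a : A, ∑ n, (if s n then (1 : ℝ) else -1) * fk n (a.1 n) :=
            ih (le_of_lt hkN)
        _ ≤ _ := by
            rw [hupd]
            exact step_lemma N fk ρ hρ hfk A hA hbdd m
  have hfinal := main N le_rfl
  refine div_le_div_of_nonneg_right ?_ (by positivity)
  calc (∑ s : Fin N → Bool, ⨆ a : A, ∑ n, (if s n then (1 : ℝ) else -1) * ℓ n (a.1 n))
      ≤ _ := hfinal
    _ = _ := by
        apply Finset.sum_congr rfl
        intro s _
        apply iSup_congr
        intro a
        apply Finset.sum_congr rfl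
        intro n _
        simp [n.is_lt]
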